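/- Let Λ be a finite simple graph with vertices v_1, …, v_n and n ≥ 3, and let Γ(Λ) be the graph of the explicit construction. Then for all vertices u, w of Γ(Λ), the inclusion lk(u) ⊆ st(w) implies u = w. -/

import Mathlib

open SimpleGraph
open scoped commutatorElement

/-- The set of commutator relations defining the right-angled Artin group of a graph. -/
def raagRels {V : Type} (G : SimpleGraph V) : Set (FreeGroup V) :=
  {r | ∃ v w : V, G.Adj v w ∧ r = ⁅FreeGroup.of v, FreeGroup.of w⁆}

/-- The right-angled Artin group of a graph `G`. -/
abbrev RAAG {V : Type} (G : SimpleGraph V) : Type := PresentedGroup (raagRels G)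

/-- The subgroup of inner automorphisms of a group. -/
def Inn (G : Type*) [Group G] : Subgroup (MulAut G) := (MulAut.conj (G := G)).range

instance Inn.normal (G : Type*) [Group G] : (Inn G).Normal := by
  constructor
  intro x hx φ
  obtain ⟨g, rfl⟩ := hx
  refine ⟨φ g, ?_⟩
  ext h
  simp [MulAut.conj, mul_assoc]

/-- The outer automorphism group of a group. -/
abbrev Out (G : Type*) [Group G] : Type _ := MulAut G ⧸ Inn G

/-- The group of pure symmetric automorphisms of the right-angled Artin group of `G`:
those automorphisms sending each generator to a conjugate of itself. -/
def PSA {V : Type} (G : SimpleGraph V) : Subgroup (MulAut (RAAG G)) where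
  carrier := {φ | ∀ v : V,
    IsConj (PresentedGroup.of (rels := raagRels G) v) (φ (PresentedGroup.of v))}
  one_mem' := fun _ => IsConj.refl _
  mul_mem' := by
    intro φ ψ hφ hψ v
    rw [MulAut.mul_apply]
    exact (hφ v).trans (φ.toMonoidHom.map_isConj (hψ v))
  inv_mem' := by
    intro φ hφ v
    have h := (φ⁻¹ : MulAut (RAAG G)).toMonoidHom.map_isConj (hφ v)
    simp only [MulEquiv.coe_toMonoidHom] at h
    have h2 : (φ⁻¹ : MulAut (RAAG G)) (φ (PresentedGroup.of v)) = PresentedGroup.of v := by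
      simp
    rw [h2] at h
    exact h.symm

/-- The group of pure symmetric outer automorphisms: the image of `PSA` in `Out`. -/
def PSO {V : Type} (G : SimpleGraph V) : Subgroup (Out (RAAG G)) :=
  (PSA G).map (QuotientGroup.mk' (Inn (RAAG G)))

/-- The star of a vertex: the vertex together with its neighbours. -/
def graphStar {V : Type} (G : SimpleGraph V) (v : V) : Set V := insert v (G.neighborSet v)

/-- `IsCompOf G s A` says that `A` is the vertex set of a connected component of the
induced subgraph of `G` on `s`. -/
def IsCompOf {V : Type} (G : SimpleGraph V) (s : Set V) (A : Set V) : Prop :=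
  ∃ a : s, A = {x : V | ∃ hx : x ∈ s, (SimpleGraph.induce s G).Reachable ⟨x, hx⟩ a}

/-- The support graph of `G` at a vertex `v`: vertices are the connected components of
`G - st(v)`, and two distinct components `A`, `B` are adjacent if there is `b ∈ B` such
that `A` is also a connected component of `G - st(b)`, or symmetrically. -/
def SupportGraph {V : Type} (G : SimpleGraph V) (v : V) :
    SimpleGraph {A : Set V // IsCompOf G (graphStar G v)ᶜ A} :=
  SimpleGraph.fromRel (fun A B => ∃ b ∈ B.1, IsCompOf G (graphStar G b)ᶜ A.1)

/-- A pair of distinct non-adjacent vertices `(v, w)` is a separating intersection of links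
if `G - (lk(v) ∩ lk(w))` has a connected component containing neither `v` nor `w`. -/
def SILPair {V : Type} (G : SimpleGraph V) (v w : V) : Prop :=
  v ≠ w ∧ ¬ G.Adj v w ∧
    ∃ A : Set V, IsCompOf G (G.neighborSet v ∩ G.neighborSet w)ᶜ A ∧ v ∉ A ∧ w ∉ A
/-- Vertices of the graph `Γ(Λ)`: the vertices of `Λ` (indexed by `Fin n`, with `v i`
denoting `v_{i+1}`) together with new vertices `a₁, a₂, b₁, b₂, c₁, …, c_n, d₁, d₂`. -/
inductive GV (n : ℕ) : Type where
  | v (i : Fin n)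
  | a1 | a2 | b1 | b2
  | c (i : Fin n)
  | d1 | d2
deriving DecidableEq

/-- The edge relation of the graph `Γ(Λ)` (to be symmetrized by `SimpleGraph.fromRel`). -/
def gammaRel {n : ℕ} (Λ : SimpleGraph (Fin n)) : GV n → GV n → Prop
  | .v i, .v j => Λ.Adj i j
  | .c i, .v j => j = i ∨ (j : ℕ) = ((i : ℕ) + 1) % n
  | .c _, .d1 => True
  | .c _, .d2 => True
  | .d1, .v j => (j : ℕ) = 0
  | .d1, .b1 => True
  | .d2, .v j => (j : ℕ) ≠ 0
  | .d2, .b2 => True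
  | .v _, .b1 => True
  | .v _, .b2 => True
  | .b1, .a1 => True
  | .b2, .a2 => True
  | .a1, .a2 => True
  | _, _ => False

/-- The graph `Γ(Λ)` of the explicit construction. -/
def GammaGraph {n : ℕ} (Λ : SimpleGraph (Fin n)) : SimpleGraph (GV n) :=
  SimpleGraph.fromRel (gammaRel Λ)

/-- Vertices of the graph `Γ'(Λ)`: the vertices of `Λ` (indexed by `Fin n`, with `v i`
denoting `v_{i+1}`) together with new vertices
`a₁, a₂, a₃, b₁, b₂, b₃, c₁, …, c_n, d₁, d₂, d₃`. -/
inductive GV' (n : ℕ) : Type where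
  | v (i : Fin n)
  | a1 | a2 | a3 | b1 | b2 | b3
  | c (i : Fin n)
  | d1 | d2 | d3
deriving DecidableEq

/-- The edge relation of the graph `Γ'(Λ)` (to be symmetrized by `SimpleGraph.fromRel`). -/
def gammaRel' {n : ℕ} (Λ : SimpleGraph (Fin n)) : GV' n → GV' n → Prop
  | .v i, .v j => Λ.Adj i j
  | .c i, .v j => j = i ∨ (j : ℕ) = ((i : ℕ) + 1) % n
  | .c _, .d1 => True
  | .c _, .d2 => True
  | .c _, .d3 => True
  | .d1, .v j => (j : ℕ) = 0
  | .d1, .b1 => True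
  | .d2, .v j => (j : ℕ) = 1
  | .d3, .v j => 2 ≤ (j : ℕ)
  | .d3, .b3 => True
  | .d2, .d3 => True
  | .v _, .b1 => True
  | .v _, .b2 => True
  | .v _, .b3 => True
  | .b1, .a1 => True
  | .b2, .a2 => True
  | .b3, .a3 => True
  | .a1, .a2 => True
  | .a1, .a3 => True
  | .a2, .a3 => True
  | _, _ => False

/-- The graph `Γ'(Λ)` of the second explicit construction. -/
def GammaGraph' {n : ℕ} (Λ : SimpleGraph (Fin n)) : SimpleGraph (GV' n) :=
  SimpleGraph.fromRel (gammaRel' Λ)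

/-! If `lk(u) ⊆ st(w)` then `w ∈ st(x)` for every neighbour `x` of `u`, so it suffices to find,
for each vertex `u` of `Γ(Λ)`, a few neighbours whose stars meet only in `u`. For the outer
vertices this is read off directly (e.g. `st(b₁) ∩ st(a₂) = {a₁}`); for the others it comes from
the `2n`-cycle `v₁ c₁ v₂ c₂ … v_n c_n`. The set `st(b₁) ∩ st(b₂)` consists of the `vⱼ`, and only
`vᵢ` lies in both `st(c_{i-1})` and `st(cᵢ)`; the set `st(d₁) ∩ st(d₂)` consists of the `cⱼ`,
and only `cᵢ` lies in both `st(vᵢ)` and `st(v_{i+1})`; the stars of all the `cₖ` meet in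
`{d₁, d₂}`. Each of these uses `n ≥ 3`, i.e. `1 ≠ 0` and `2 ≠ 0` in `Fin n`. -/
lemma mem_graphStar {V : Type} {G : SimpleGraph V} {x y : V} :
    y ∈ graphStar G x ↔ y = x ∨ G.Adj x y := Iff.rfl

lemma mem_graphStar_comm {V : Type} {G : SimpleGraph V} {x y : V} :
    y ∈ graphStar G x ↔ x ∈ graphStar G y := by
  simp only [mem_graphStar, eq_comm, G.adj_comm]

namespace Fin
variable {n : ℕ} [NeZero n]

lemma one_ne_zero_of_two_le (hn : 2 ≤ n) : (1 : Fin n) ≠ 0 := by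
  simp [Fin.ext_iff]
  omega

lemma two_ne_zero_of_three_le (hn : 3 ≤ n) : (2 : Fin n) ≠ 0 := by
  simp [Fin.ext_iff, Nat.mod_eq_of_lt (show 2 < n by omega)]

end Fin

namespace GammaGraph
variable {n : ℕ} {Λ : SimpleGraph (Fin n)}

lemma adj_c_v_iff [NeZero n] {i j : Fin n} :
    (GammaGraph Λ).Adj (.c i) (.v j) ↔ j = i ∨ j = i + 1 := by
  simp [GammaGraph, gammaRel, Fin.ext_iff, Fin.val_add]

lemma v_mem_graphStar_c [NeZero n] {i j : Fin n} :
    GV.v j ∈ graphStar (GammaGraph Λ) (.c i) ↔ j = i ∨ j = i + 1 := by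
  simp [mem_graphStar, adj_c_v_iff]

lemma c_mem_graphStar_v [NeZero n] {i j : Fin n} :
    GV.c j ∈ graphStar (GammaGraph Λ) (.v i) ↔ i = j ∨ i = j + 1 := by
  rw [mem_graphStar_comm, v_mem_graphStar_c]

lemma eq_a1_of_mem_graphStar {w : GV n} (hb : w ∈ graphStar (GammaGraph Λ) .b1)
    (ha : w ∈ graphStar (GammaGraph Λ) .a2) : w = .a1 := by
  cases w <;> simp_all [mem_graphStar, GammaGraph, gammaRel]

lemma eq_a2_of_mem_graphStar {w : GV n} (hb : w ∈ graphStar (GammaGraph Λ) .b2)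
    (ha : w ∈ graphStar (GammaGraph Λ) .a1) : w = .a2 := by
  cases w <;> simp_all [mem_graphStar, GammaGraph, gammaRel]

lemma eq_b1_of_mem_graphStar {w : GV n} (ha : w ∈ graphStar (GammaGraph Λ) .a1)
    (hd : w ∈ graphStar (GammaGraph Λ) .d1) : w = .b1 := by
  cases w <;> simp_all [mem_graphStar, GammaGraph, gammaRel]

lemma eq_b2_of_mem_graphStar {w : GV n} (ha : w ∈ graphStar (GammaGraph Λ) .a2)
    (hd : w ∈ graphStar (GammaGraph Λ) .d2) : w = .b2 := by
  cases w <;> simp_all [mem_graphStar, GammaGraph, gammaRel]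

lemma exists_eq_c_of_mem_graphStar {w : GV n} (h₁ : w ∈ graphStar (GammaGraph Λ) .d1)
    (h₂ : w ∈ graphStar (GammaGraph Λ) .d2) : ∃ j, w = .c j := by
  cases w <;> simp_all [mem_graphStar, GammaGraph, gammaRel]

lemma exists_eq_v_of_mem_graphStar {w : GV n} (h₁ : w ∈ graphStar (GammaGraph Λ) .b1)
    (h₂ : w ∈ graphStar (GammaGraph Λ) .b2) : ∃ j, w = .v j := by
  cases w <;> simp_all [mem_graphStar, GammaGraph, gammaRel]

variable [NeZero n]
open Fin.CommRing

lemma eq_c_of_mem_graphStar (hn : 3 ≤ n) {i : Fin n} {w : GV n}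
    (h₁ : w ∈ graphStar (GammaGraph Λ) .d1) (h₂ : w ∈ graphStar (GammaGraph Λ) .d2)
    (h₃ : w ∈ graphStar (GammaGraph Λ) (.v i))
    (h₄ : w ∈ graphStar (GammaGraph Λ) (.v (i + 1))) :
    w = .c i := by
  obtain ⟨j, rfl⟩ := exists_eq_c_of_mem_graphStar h₁ h₂
  rw [c_mem_graphStar_v] at h₃ h₄
  rcases h₃ with rfl | rfl
  · rfl
  · rcases h₄ with h | h
    · exact absurd (by linear_combination h) (Fin.two_ne_zero_of_three_le hn)
    · exact absurd (by linear_combination h) (Fin.one_ne_zero_of_two_le (Nat.le_of_succ_le hn))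

lemma eq_v_of_mem_graphStar (hn : 3 ≤ n) {i : Fin n} {w : GV n}
    (h₁ : w ∈ graphStar (GammaGraph Λ) .b1) (h₂ : w ∈ graphStar (GammaGraph Λ) .b2)
    (h₃ : w ∈ graphStar (GammaGraph Λ) (.c (i - 1)))
    (h₄ : w ∈ graphStar (GammaGraph Λ) (.c i)) :
    w = .v i := by
  obtain ⟨j, rfl⟩ := exists_eq_v_of_mem_graphStar h₁ h₂
  rw [v_mem_graphStar_c] at h₃ h₄
  rw [sub_add_cancel] at h₃
  rcases h₄ with rfl | rfl
  · rfl
  · rcases h₃ with h | h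
    · exact absurd (by linear_combination h) (Fin.two_ne_zero_of_three_le hn)
    · rw [h]

lemma eq_d1_or_eq_d2_of_forall_mem_graphStar (hn : 3 ≤ n) {w : GV n}
    (hc : ∀ k, w ∈ graphStar (GammaGraph Λ) (.c k)) : w = .d1 ∨ w = .d2 := by
  cases w
  case v j =>
    rcases v_mem_graphStar_c.1 (hc (j + 1)) with h | h
    · exact absurd (by linear_combination -h) (Fin.one_ne_zero_of_two_le (Nat.le_of_succ_le hn))
    · exact absurd (by linear_combination -h) (Fin.two_ne_zero_of_three_le hn)
  case c j =>
    have h : j = j + 1 := by simpa [mem_graphStar, GammaGraph, gammaRel] using hc (j + 1)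
    exact absurd (by linear_combination -h) (Fin.one_ne_zero_of_two_le (Nat.le_of_succ_le hn))
  all_goals simp_all [mem_graphStar, GammaGraph, gammaRel]

lemma eq_d1_of_mem_graphStar (hn : 3 ≤ n) {w : GV n} (hb : w ∈ graphStar (GammaGraph Λ) .b1)
    (hc : ∀ k, w ∈ graphStar (GammaGraph Λ) (.c k)) : w = .d1 := by
  rcases eq_d1_or_eq_d2_of_forall_mem_graphStar hn hc with rfl | rfl
  · rfl
  · simp [mem_graphStar, GammaGraph, gammaRel] at hb

lemma eq_d2_of_mem_graphStar (hn : 3 ≤ n) {w : GV n} (hb : w ∈ graphStar (GammaGraph Λ) .b2)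
    (hc : ∀ k, w ∈ graphStar (GammaGraph Λ) (.c k)) : w = .d2 := by
  rcases eq_d1_or_eq_d2_of_forall_mem_graphStar hn hc with rfl | rfl
  · simp [mem_graphStar, GammaGraph, gammaRel] at hb
  · rfl

end GammaGraph

open GammaGraph

/-- In `Γ(Λ)` (with `n ≥ 3`), `lk(u) ⊆ st(w)` implies `u = w`. -/
theorem gammaGraph_link_star_condition
    (n : ℕ) (hn : 3 ≤ n) (Λ : SimpleGraph (Fin n)) :
    ∀ u w : GV n,
      (GammaGraph Λ).neighborSet u ⊆ graphStar (GammaGraph Λ) w → u = w := by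
  intro u w h
  have : NeZero n := ⟨by omega⟩
  have hw : ∀ x, (GammaGraph Λ).Adj u x → w ∈ graphStar (GammaGraph Λ) x :=
    fun x hx => mem_graphStar_comm.1 (h hx)
  symm
  cases u with
  | a1 => refine eq_a1_of_mem_graphStar (hw _ ?_) (hw _ ?_) <;> simp [GammaGraph, gammaRel]
  | a2 => refine eq_a2_of_mem_graphStar (hw _ ?_) (hw _ ?_) <;> simp [GammaGraph, gammaRel]
  | b1 => refine eq_b1_of_mem_graphStar (hw _ ?_) (hw _ ?_) <;> simp [GammaGraph, gammaRel]
  | b2 => refine eq_b2_of_mem_graphStar (hw _ ?_) (hw _ ?_) <;> simp [GammaGraph, gammaRel]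
  | d1 =>
    refine eq_d1_of_mem_graphStar hn (hw _ ?_) (fun k => hw _ ?_) <;> simp [GammaGraph, gammaRel]
  | d2 =>
    refine eq_d2_of_mem_graphStar hn (hw _ ?_) (fun k => hw _ ?_) <;> simp [GammaGraph, gammaRel]
  | c i =>
    refine eq_c_of_mem_graphStar hn (hw _ ?_) (hw _ ?_) (hw _ (adj_c_v_iff.2 (.inl rfl)))
      (hw _ (adj_c_v_iff.2 (.inr rfl))) <;> simp [GammaGraph, gammaRel]
  | v i =>
    refine eq_v_of_mem_graphStar hn (hw _ ?_) (hw _ ?_)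
      (hw _ (adj_c_v_iff.2 (.inr (sub_add_cancel i 1).symm)).symm)
      (hw _ (adj_c_v_iff.2 (.inl rfl)).symm) <;> simp [GammaGraph, gammaRel]
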